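/- For every t ≥ 0, the Lindblad semigroup exp(t𝓛̃) maps block-diagonal matrices to block-diagonal matrices; moreover, for block-diagonal initial data ∑_j ηⱼ(0) ⊗ Eⱼⱼ, the i-th diagonal block ηᵢ(t) of exp(t𝓛̃)[ ∑_j ηⱼ(0) ⊗ Eⱼⱼ ] is differentiable in t and satisfies d/dt ηᵢ(t) = 𝒦ᵢ(η₁(t),…,ηₙ(t)) for all t ≥ 0, while all off-diagonal blocks remain zero. -/

import Mathlib

open Matrix Kronecker

attribute [local instance] Matrix.linftyOpNormedAddCommGroup Matrix.linftyOpNormedRing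
  Matrix.linftyOpNormedAlgebra

/-- The Lindblad generator `𝓛[τ] = −i[H,τ] + ∑_γ ( A_γ τ A_γ* − ½{A_γ* A_γ, τ} )`,
as a continuous linear map on matrices. -/
noncomputable def lindbladCLM {N ι : Type*} [Fintype N] [DecidableEq N] [Fintype ι]
    (H : Matrix N N ℂ) (A : ι → Matrix N N ℂ) :
    Matrix N N ℂ →L[ℂ] Matrix N N ℂ :=
  LinearMap.toContinuousLinearMap
    ((-Complex.I) • (LinearMap.mulLeft ℂ H - LinearMap.mulRight ℂ H)
      + ∑ γ : ι, ((LinearMap.mulRight ℂ (A γ)ᴴ).comp (LinearMap.mulLeft ℂ (A γ))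
          - (1/2 : ℂ) • (LinearMap.mulLeft ℂ ((A γ)ᴴ * A γ)
              + LinearMap.mulRight ℂ ((A γ)ᴴ * A γ))))

/-- The Lindblad rate generator
`𝒦ᵢ(τ₁,…,τₙ) = −i[Hⁱ,τᵢ] + ∑_{α∈A} ∑_k ( R^{ik}_α τ_k (R^{ik}_α)* − ½{(R^{ki}_α)* R^{ki}_α, τᵢ} )`. -/
noncomputable def Kgen {n d : ℕ} {A : Type*} [Fintype A]
    (H : Fin n → Matrix (Fin d) (Fin d) ℂ)
    (R : A → Fin n → Fin n → Matrix (Fin d) (Fin d) ℂ)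
    (τ : Fin n → Matrix (Fin d) (Fin d) ℂ) (i : Fin n) :
    Matrix (Fin d) (Fin d) ℂ :=
  -Complex.I • (H i * τ i - τ i * H i)
    + ∑ α : A, ∑ k : Fin n,
      (R α i k * τ k * (R α i k)ᴴ
        - (1/2 : ℂ) • ((R α k i)ᴴ * R α k i * τ i + τ i * ((R α k i)ᴴ * R α k i)))

/-- The extended Lindblad generator `𝓛̃` on `M_d(ℂ) ⊗ M_n(ℂ)`, built from
`H = ∑ᵢ Hⁱ ⊗ Eᵢᵢ` and the Lindblad operators `S^{ij}_α = R^{ij}_α ⊗ Eᵢⱼ`. -/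
noncomputable def LtildeCLM {n d : ℕ} {A : Type*} [Fintype A]
    (H : Fin n → Matrix (Fin d) (Fin d) ℂ)
    (R : A → Fin n → Fin n → Matrix (Fin d) (Fin d) ℂ) :
    Matrix (Fin d × Fin n) (Fin d × Fin n) ℂ →L[ℂ]
      Matrix (Fin d × Fin n) (Fin d × Fin n) ℂ :=
  lindbladCLM (∑ i : Fin n, H i ⊗ₖ single i i (1 : ℂ))
    (fun x : A × Fin n × Fin n => R x.1 x.2.1 x.2.2 ⊗ₖ single x.2.1 x.2.2 (1 : ℂ))

/-- The `i`-th diagonal block of a matrix on `ℋ_S ⊗ ℂⁿ` (compression by `I_d ⊗ Eᵢᵢ`). -/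
def blk {n d : ℕ} (X : Matrix (Fin d × Fin n) (Fin d × Fin n) ℂ) (i : Fin n) :
    Matrix (Fin d) (Fin d) ℂ :=
  Matrix.of fun a c => X (a, i) (c, i)

instance instIsTopologicalRingMatrixCLM {N : Type*} [Fintype N] [DecidableEq N] :
    IsTopologicalRing (Matrix N N ℂ →L[ℂ] Matrix N N ℂ) := by
  let _ : NormedRing (Matrix N N ℂ →L[ℂ] Matrix N N ℂ) := ContinuousLinearMap.toNormedRing
  exact NonUnitalSeminormedRing.toIsTopologicalRing

/-!
Write `∑ⱼ τⱼ ⊗ Eⱼⱼ` as `blockDiagonal τ`. For `S = R ⊗ Eₖₗ` the jump term `S X S*` of a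
block-diagonal `X` lies in block `k` and the anticommutator `{S*S, X}` in block `l`, which gives
`𝓛̃ (blockDiagonal τ) = blockDiagonal (𝒦 τ)`. So `𝓛̃` leaves the closed subspace of
block-diagonal matrices invariant, and therefore so does every partial sum of the exponential
series of `t𝓛̃`. Then `d/dt exp(t𝓛̃) X = 𝓛̃ (exp(t𝓛̃) X)`, and because `exp(t𝓛̃) X` is
block-diagonal, its `i`-th block is `𝒦ᵢ` applied to the blocks.
-/

open NormedSpace

namespace Matrix

variable {m o α : Type*} [DecidableEq o]

theorem blockDiagonal_sum [AddCommMonoid α] {ι : Type*} (s : Finset ι)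
    (f : ι → o → Matrix m m α) :
    blockDiagonal (∑ i ∈ s, f i) = ∑ i ∈ s, blockDiagonal (f i) :=
  map_sum (blockDiagonalAddMonoidHom m m o α) f s

theorem kronecker_single_one_self [MulZeroOneClass α] (M : Matrix m m α) (k : o) :
    M ⊗ₖ single k k (1 : α) = blockDiagonal (Pi.single k M) := by
  ext ⟨a, p⟩ ⟨b, q⟩
  simp only [kronecker_apply, single_apply, blockDiagonal_apply, Pi.single_apply]
  split_ifs <;> aesop

theorem sum_kronecker_single_one_self [Fintype o] [NonAssocSemiring α] (τ : o → Matrix m m α) :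
    ∑ k, τ k ⊗ₖ single k k (1 : α) = blockDiagonal τ := by
  simp_rw [kronecker_single_one_self, ← blockDiagonal_sum, Finset.univ_sum_single]

theorem conjTranspose_kronecker_single_one [CommSemiring α] [StarRing α] (M : Matrix m m α)
    (k l : o) : (M ⊗ₖ single k l (1 : α))ᴴ = Mᴴ ⊗ₖ single l k 1 := by
  rw [conjTranspose_kronecker]
  congr 1
  ext p q
  simp only [conjTranspose_apply, single_apply]
  split_ifs <;> simp_all

variable (m o α) in
def blockDiagonalSubmodule [Semiring α] : Submodule α (Matrix (m × o) (m × o) α) where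
  carrier := {M | ∀ i j, i.2 ≠ j.2 → M i j = 0}
  add_mem' hM hN i j h := by simp [hM i j h, hN i j h]
  zero_mem' _ _ _ := rfl
  smul_mem' c _ hM i j h := by simp [hM i j h]

theorem mem_blockDiagonalSubmodule_iff [Semiring α] {M : Matrix (m × o) (m × o) α} :
    M ∈ blockDiagonalSubmodule m o α ↔ blockDiagonal (blockDiag M) = M := by
  constructor
  · intro hM
    ext ⟨a, k⟩ ⟨b, l⟩
    by_cases hkl : k = l
    · subst hkl
      rw [blockDiagonal_apply_eq, blockDiag_apply]
    · rw [blockDiagonal_apply_ne _ _ _ hkl, hM (a, k) (b, l) hkl]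
  · intro hM ⟨a, k⟩ ⟨b, l⟩ hkl
    rw [← hM, blockDiagonal_apply_ne _ _ _ hkl]

theorem blockDiagonal_mem_blockDiagonalSubmodule [Semiring α] (τ : o → Matrix m m α) :
    blockDiagonal τ ∈ blockDiagonalSubmodule m o α :=
  fun _ _ h => blockDiagonal_apply_ne _ _ _ h

omit [DecidableEq o] in
variable (m α) in
def blockDiagCLM [CommSemiring α] [TopologicalSpace α] (k : o) :
    Matrix (m × o) (m × o) α →L[α] Matrix m m α where
  toFun M := blockDiag M k
  map_add' _ _ := rfl
  map_smul' _ _ := rfl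
  cont := (continuous_apply k).comp continuous_id.matrix_blockDiag

variable [Fintype m] [Fintype o] [CommSemiring α]

theorem kronecker_single_one_mul_kronecker_single_one (M M' : Matrix m m α) (i j k : o) :
    (M ⊗ₖ single i j (1 : α)) * (M' ⊗ₖ single j k 1) = (M * M') ⊗ₖ single i k 1 := by
  rw [← mul_kronecker_mul, single_mul_single_same, one_mul]

theorem kronecker_single_one_mul_blockDiagonal (M : Matrix m m α) (τ : o → Matrix m m α)
    (k l : o) : (M ⊗ₖ single k l (1 : α)) * blockDiagonal τ = (M * τ l) ⊗ₖ single k l 1 := by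
  rw [← sum_kronecker_single_one_self, Finset.mul_sum, Finset.sum_eq_single l]
  · exact kronecker_single_one_mul_kronecker_single_one M (τ l) k l l
  · intro j _ hj
    rw [← mul_kronecker_mul, single_mul_single_of_ne (h := hj.symm), kronecker_zero]
  · simp

theorem blockDiagonal_mul_kronecker_single_one (M : Matrix m m α) (τ : o → Matrix m m α)
    (k l : o) : blockDiagonal τ * (M ⊗ₖ single k l (1 : α)) = (τ k * M) ⊗ₖ single k l 1 := by
  rw [← sum_kronecker_single_one_self, Finset.sum_mul, Finset.sum_eq_single k]
  · exact kronecker_single_one_mul_kronecker_single_one (τ k) M k k l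
  · intro j _ hj
    rw [← mul_kronecker_mul, single_mul_single_of_ne (h := hj), kronecker_zero]
  · simp

end Matrix

namespace ContinuousLinearMap

variable {𝕜 E : Type*} [NormedField 𝕜] [TopologicalSpace E] [AddCommGroup E] [Module 𝕜 E]
  [IsTopologicalAddGroup E] [ContinuousSMul 𝕜 E]

def invtSubalgebra (p : Submodule 𝕜 E) : Subalgebra 𝕜 (E →L[𝕜] E) where
  carrier := {T | Set.MapsTo T p p}
  mul_mem' hT hS := hT.comp hS
  add_mem' hT hS _ hx := p.add_mem (hT hx) (hS hx)
  algebraMap_mem' c _ hx := p.smul_mem c hx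

theorem isClosed_invtSubalgebra {p : Submodule 𝕜 E} (hp : IsClosed (p : Set E)) :
    IsClosed (invtSubalgebra p : Set (E →L[𝕜] E)) := by
  have : (invtSubalgebra p : Set (E →L[𝕜] E)) = ⋂ x ∈ p, (fun T : E →L[𝕜] E => T x) ⁻¹' p := by
    ext T
    simp [invtSubalgebra, Set.MapsTo]
  rw [this]
  exact isClosed_biInter fun x _ => hp.preimage (continuous_eval_const x)

end ContinuousLinearMap

theorem hasDerivAt_exp_ofReal_smul_apply {E F : Type*} [NormedAddCommGroup E] [NormedSpace ℂ E]
    [CompleteSpace E] [NormedAddCommGroup F] [NormedSpace ℂ F] (f : E →L[ℂ] F) (T : E →L[ℂ] E)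
    (x : E) (t : ℝ) :
    HasDerivAt (fun s : ℝ => f (exp ((s : ℂ) • T) x)) (f (T (exp ((t : ℂ) • T) x))) t := by
  have hexp := (hasDerivAt_exp_smul_const' T (t : ℂ)).hasFDerivAt.restrictScalars ℝ
  have := (((f.comp (ContinuousLinearMap.apply ℂ E x)).restrictScalars ℝ).hasFDerivAt.comp _
    hexp).comp_hasDerivAt t Complex.ofRealCLM.hasDerivAt
  simpa [Function.comp_def] using this

theorem lindbladCLM_apply {N ι : Type*} [Fintype N] [DecidableEq N] [Fintype ι]
    (H : Matrix N N ℂ) (A : ι → Matrix N N ℂ) (X : Matrix N N ℂ) :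
    lindbladCLM H A X = (-Complex.I) • (H * X - X * H)
      + ∑ γ, (A γ * X * (A γ)ᴴ - (1/2 : ℂ) • ((A γ)ᴴ * A γ * X + X * ((A γ)ᴴ * A γ))) := by
  simp [lindbladCLM, mul_assoc, smul_add, sub_eq_add_neg]

theorem dissipator_kronecker_single_one_blockDiagonal {m o : Type*} [Fintype m] [Fintype o]
    [DecidableEq o] (M : Matrix m m ℂ) (τ : o → Matrix m m ℂ) (k l : o) :
    (M ⊗ₖ single k l 1) * blockDiagonal τ * (M ⊗ₖ single k l 1)ᴴ
      - (1/2 : ℂ) • ((M ⊗ₖ single k l 1)ᴴ * (M ⊗ₖ single k l 1) * blockDiagonal τ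
        + blockDiagonal τ * ((M ⊗ₖ single k l 1)ᴴ * (M ⊗ₖ single k l 1)))
    = blockDiagonal (Pi.single k (M * τ l * Mᴴ)
        - (1/2 : ℂ) • (Pi.single l (Mᴴ * M * τ l + τ l * (Mᴴ * M)) : o → Matrix m m ℂ)) := by
  rw [conjTranspose_kronecker_single_one, kronecker_single_one_mul_blockDiagonal,
    kronecker_single_one_mul_kronecker_single_one, kronecker_single_one_mul_kronecker_single_one,
    kronecker_single_one_mul_blockDiagonal, blockDiagonal_mul_kronecker_single_one,
    ← add_kronecker, kronecker_single_one_self, kronecker_single_one_self, blockDiagonal_sub,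
    blockDiagonal_smul]

section Ltilde

variable {n d : ℕ} {A : Type*} [Fintype A] (H : Fin n → Matrix (Fin d) (Fin d) ℂ)
  (R : A → Fin n → Fin n → Matrix (Fin d) (Fin d) ℂ)

theorem LtildeCLM_blockDiagonal (τ : Fin n → Matrix (Fin d) (Fin d) ℂ) :
    LtildeCLM H R (blockDiagonal τ) = blockDiagonal (Kgen H R τ) := by
  rw [LtildeCLM, lindbladCLM_apply, sum_kronecker_single_one_self]
  simp only [dissipator_kronecker_single_one_blockDiagonal, ← blockDiagonal_mul,
    ← blockDiagonal_sub, ← blockDiagonal_smul]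
  rw [← blockDiagonal_sum, ← blockDiagonal_add]
  congr 1
  funext i
  simp [Kgen, Fintype.sum_prod_type, Finset.sum_apply, Pi.single_apply, Finset.sum_sub_distrib]

theorem LtildeCLM_mem_invtSubalgebra :
    LtildeCLM H R ∈
      ContinuousLinearMap.invtSubalgebra (blockDiagonalSubmodule (Fin d) (Fin n) ℂ) := by
  intro X hX
  rw [← mem_blockDiagonalSubmodule_iff.mp hX, LtildeCLM_blockDiagonal]
  exact blockDiagonal_mem_blockDiagonalSubmodule _

theorem blockDiag_LtildeCLM {X : Matrix (Fin d × Fin n) (Fin d × Fin n) ℂ}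
    (hX : X ∈ blockDiagonalSubmodule (Fin d) (Fin n) ℂ) :
    blockDiag (LtildeCLM H R X) = Kgen H R (blockDiag X) := by
  rw [← mem_blockDiagonalSubmodule_iff.mp hX, LtildeCLM_blockDiagonal, blockDiag_blockDiagonal,
    blockDiag_blockDiagonal]

end Ltilde

theorem exp_ltilde_blockDiagonal_general {n d : ℕ}
    {A : Type*} [Fintype A]
    (H : Fin n → Matrix (Fin d) (Fin d) ℂ)
    (R : A → Fin n → Fin n → Matrix (Fin d) (Fin d) ℂ)
    (η0 : Fin n → Matrix (Fin d) (Fin d) ℂ) :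
    (∀ X : Matrix (Fin d × Fin n) (Fin d × Fin n) ℂ,
      (∀ p q, p.2 ≠ q.2 → X p q = 0) →
      ∀ t : ℝ, 0 ≤ t → ∀ p q, p.2 ≠ q.2 →
        NormedSpace.exp ((t : ℂ) • LtildeCLM H R) X p q = 0) ∧
    (∀ t : ℝ, 0 ≤ t → ∀ i : Fin n,
      HasDerivAt
        (fun s : ℝ => blk
          (NormedSpace.exp ((s : ℂ) • LtildeCLM H R)
            (∑ j : Fin n, η0 j ⊗ₖ single j j (1 : ℂ))) i)
        (Kgen H R
          (fun j => blk
            (NormedSpace.exp ((t : ℂ) • LtildeCLM H R)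
              (∑ j : Fin n, η0 j ⊗ₖ single j j (1 : ℂ))) j) i)
        t) := by
  have hexp (t : ℝ) : exp ((t : ℂ) • LtildeCLM H R) ∈
      ContinuousLinearMap.invtSubalgebra (blockDiagonalSubmodule (Fin d) (Fin n) ℂ) :=
    exp_mem (ContinuousLinearMap.isClosed_invtSubalgebra (Submodule.closed_of_finiteDimensional _))
      (Subalgebra.smul_mem _ (LtildeCLM_mem_invtSubalgebra H R) _)
  refine ⟨fun X hX t _ => hexp t hX, fun t _ i => ?_⟩
  rw [sum_kronecker_single_one_self]
  set Y := exp ((t : ℂ) • LtildeCLM H R) (blockDiagonal η0)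
  have hY : Y ∈ blockDiagonalSubmodule (Fin d) (Fin n) ℂ :=
    hexp t (blockDiagonal_mem_blockDiagonalSubmodule η0)
  -- `blk` is `blockDiag` unfolded
  have hrate : Kgen H R (fun j => blk Y j) i = blk (LtildeCLM H R Y) i :=
    (congrFun (blockDiag_LtildeCLM H R hY) i).symm
  rw [hrate]
  exact hasDerivAt_exp_ofReal_smul_apply (blockDiagCLM (Fin d) ℂ i) (LtildeCLM H R)
    (blockDiagonal η0) t

/-- For every `t ≥ 0` the semigroup `exp(t𝓛̃)` maps block-diagonal matrices to block-diagonal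
matrices; moreover for block-diagonal initial data `∑ⱼ ηⱼ(0) ⊗ Eⱼⱼ` the diagonal blocks
`ηᵢ(t)` of `exp(t𝓛̃)[∑ⱼ ηⱼ(0) ⊗ Eⱼⱼ]` are differentiable in `t` and satisfy the Lindblad
rate equation `d/dt ηᵢ(t) = 𝒦ᵢ(η₁(t),…,ηₙ(t))`, while all off-diagonal blocks remain zero. -/
theorem exp_ltilde_blockDiagonal {n d : ℕ} (hn : 1 ≤ n) (hd : 1 ≤ d)
    {A : Type*} [Fintype A]
    (H : Fin n → Matrix (Fin d) (Fin d) ℂ) (hH : ∀ i, (H i).IsHermitian)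
    (R : A → Fin n → Fin n → Matrix (Fin d) (Fin d) ℂ)
    (η0 : Fin n → Matrix (Fin d) (Fin d) ℂ) :
    (∀ X : Matrix (Fin d × Fin n) (Fin d × Fin n) ℂ,
      (∀ p q, p.2 ≠ q.2 → X p q = 0) →
      ∀ t : ℝ, 0 ≤ t → ∀ p q, p.2 ≠ q.2 →
        NormedSpace.exp ((t : ℂ) • LtildeCLM H R) X p q = 0) ∧
    (∀ t : ℝ, 0 ≤ t → ∀ i : Fin n,
      HasDerivAt
        (fun s : ℝ => blk
          (NormedSpace.exp ((s : ℂ) • LtildeCLM H R)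
            (∑ j : Fin n, η0 j ⊗ₖ single j j (1 : ℂ))) i)
        (Kgen H R
          (fun j => blk
            (NormedSpace.exp ((t : ℂ) • LtildeCLM H R)
              (∑ j : Fin n, η0 j ⊗ₖ single j j (1 : ℂ))) j) i)
        t) :=
  exp_ltilde_blockDiagonal_general H R η0
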